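/- arXiv:math/0509170 — 7 statements merged into one kernel-verified Lean document; each statement's English description precedes it below -/
import Mathlib

section
/- Let G be a group generated by a finite symmetric set S, and let p > 1 be a real number. If h : G → ℝ is p-harmonic (i.e., for every g ∈ G, ∑_{s∈S} |h(gs⁻¹) − h(g)|^{p−2}(h(gs⁻¹) − h(g)) = 0, with the convention that the summand is 0 when h(gs⁻¹) = h(g)) and h ∈ C₀(G) (i.e., for every ε > 0 the set {g : |h(g)| > ε} is finite), then h is identically 0. -/
/-- If `h` attains its maximum and is `p`-harmonic, then it is constant. -/
lemma pharmonic_const_of_max {G : Type*} [Group G]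
    (S : Finset G) (hS_symm : ∀ s ∈ S, s⁻¹ ∈ S)
    (hS_gen : Subgroup.closure (S : Set G) = ⊤)
    (p : ℝ) (h : G → ℝ)
    (hharm : ∀ g : G,
      ∑ s ∈ S, |h (g * s⁻¹) - h g| ^ (p - 2) * (h (g * s⁻¹) - h g) = 0)
    (g₀ : G) (hmax : ∀ g, h g ≤ h g₀) :
    ∀ g : G, h g = h g₀ := by
  set M := h g₀ with hM
  -- step: at any point where h attains M, all neighbors attain M
  have step : ∀ g : G, h g = M → ∀ s ∈ S, h (g * s⁻¹) = M := by
    intro g hg s hs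
    have hnonpos : ∀ t ∈ S, |h (g * t⁻¹) - h g| ^ (p - 2) * (h (g * t⁻¹) - h g) ≤ 0 := by
      intro t _
      have hx : h (g * t⁻¹) - h g ≤ 0 := by
        rw [hg]; linarith [hmax (g * t⁻¹)]
      exact mul_nonpos_of_nonneg_of_nonpos (Real.rpow_nonneg (abs_nonneg _) _) hx
    have hz := (Finset.sum_eq_zero_iff_of_nonpos hnonpos).mp (hharm g) s hs
    by_contra hne
    have hx : h (g * s⁻¹) - h g < 0 := by
      rcases lt_or_eq_of_le (by rw [hg]; linarith [hmax (g * s⁻¹)] :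
        h (g * s⁻¹) - h g ≤ 0) with hlt | heq
      · exact hlt
      · exact absurd (by linarith : h (g * s⁻¹) = M) hne
    have habs : (0:ℝ) < |h (g * s⁻¹) - h g| := abs_pos.mpr (ne_of_lt hx)
    have : |h (g * s⁻¹) - h g| ^ (p - 2) * (h (g * s⁻¹) - h g) < 0 :=
      mul_neg_of_pos_of_neg (Real.rpow_pos_of_pos habs _) hx
    linarith [hz.le, this]
  -- propagate along the generating set
  have key : ∀ w : G, ∀ _ : w ∈ Subgroup.closure (S : Set G),
      ∀ g, h g = M → h (g * w) = M ∧ h (g * w⁻¹) = M := by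
    intro w hw
    induction hw using Subgroup.closure_induction with
    | mem x hx =>
      intro g hg
      refine ⟨?_, step g hg x hx⟩
      have := step g hg x⁻¹ (hS_symm x hx)
      simpa using this
    | one => intro g hg; constructor <;> simpa using hg
    | mul x y hx hy ihx ihy =>
      intro g hg
      constructor
      · have h1 := (ihx g hg).1
        have h2 := (ihy (g * x) h1).1
        simpa [mul_assoc] using h2
      · have h1 := (ihy g hg).2
        have h2 := (ihx (g * y⁻¹) h1).2
        simpa [mul_assoc, mul_inv_rev] using h2
    | inv x hx ihx =>
      intro g hg
      exact ⟨(ihx g hg).2, by simpa using (ihx g hg).1⟩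
  intro g
  have hg0 : g₀⁻¹ * g ∈ Subgroup.closure (S : Set G) := by
    rw [hS_gen]; trivial
  have := (key (g₀⁻¹ * g) hg0 g₀ rfl).1
  simpa using this

/-- If `h` is `p`-harmonic on a finitely generated infinite group and vanishes at
infinity, then `h` is identically zero. -/
theorem pharmonic_c0_eq_zero {G : Type*} [Group G] [Infinite G]
    (S : Finset G) (hS_symm : ∀ s ∈ S, s⁻¹ ∈ S)
    (hS_gen : Subgroup.closure (S : Set G) = ⊤)
    (p : ℝ) (hp : 1 < p) (h : G → ℝ)
    (hharm : ∀ g : G,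
      ∑ s ∈ S, |h (g * s⁻¹) - h g| ^ (p - 2) * (h (g * s⁻¹) - h g) = 0)
    (hC0 : ∀ ε : ℝ, 0 < ε → {g : G | ε < |h g|}.Finite) :
    ∀ g : G, h g = 0 := by
  by_contra hcon
  push_neg at hcon
  obtain ⟨g₁, hg₁⟩ := hcon
  have hc : (0:ℝ) < |h g₁| := abs_pos.mpr hg₁
  set c := |h g₁| with hcdef
  have hF : {g : G | c / 2 < |h g|}.Finite := hC0 _ (by linarith)
  have hg₁F : g₁ ∈ {g : G | c / 2 < |h g|} := by simp only [Set.mem_setOf_eq]; linarith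
  -- extract a maximizer of |h| over the finite set
  obtain ⟨g₀, hg₀F, hg₀max⟩ :=
    Set.exists_max_image _ (fun g => |h g|) hF ⟨g₁, hg₁F⟩
  have hmaxall : ∀ g, |h g| ≤ |h g₀| := by
    intro g
    by_cases hgF : g ∈ {g : G | c / 2 < |h g|}
    · exact hg₀max g hgF
    · have h1 : |h g| ≤ c / 2 := le_of_not_gt hgF
      have h2 : c / 2 < |h g₀| := hg₀F
      linarith
  have hg₀ne : h g₀ ≠ 0 := by
    intro h0
    have : c / 2 < |h g₀| := hg₀F
    rw [h0] at this; simp at this; linarith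
  -- h is constant
  have hconst : ∀ g, h g = h g₀ := by
    rcases le_or_gt 0 (h g₀) with hpos | hneg
    · apply pharmonic_const_of_max S hS_symm hS_gen p h hharm g₀
      intro g
      calc h g ≤ |h g| := le_abs_self _
        _ ≤ |h g₀| := hmaxall g
        _ = h g₀ := abs_of_nonneg hpos
    · have hharm' : ∀ g : G,
          ∑ s ∈ S, |(-h) (g * s⁻¹) - (-h) g| ^ (p - 2) * ((-h) (g * s⁻¹) - (-h) g) = 0 := by
        intro g
        have := hharm g
        have : -∑ s ∈ S, |h (g * s⁻¹) - h g| ^ (p - 2) * (h (g * s⁻¹) - h g) = 0 := by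
          rw [this]; ring
        rw [← this, ← Finset.sum_neg_distrib]
        apply Finset.sum_congr rfl
        intro s _
        simp only [Pi.neg_apply]
        rw [show -h (g * s⁻¹) - -h g = -(h (g * s⁻¹) - h g) by ring, abs_neg]
        ring
      have key := pharmonic_const_of_max S hS_symm hS_gen p (-h) hharm' g₀ ?_
      · intro g
        have := key g
        simpa using this
      · intro g
        simp only [Pi.neg_apply, neg_le_neg_iff]
        calc h g₀ = -|h g₀| := by rw [abs_of_neg hneg]; ring
          _ ≤ -|h g| := by linarith [hmaxall g]
          _ ≤ h g := neg_abs_le _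
  -- contradiction with C0 and infiniteness
  have hfin : {g : G | |h g₀| / 2 < |h g|}.Finite :=
    hC0 _ (by positivity)
  have : {g : G | |h g₀| / 2 < |h g|} = Set.univ := by
    ext g
    simp only [Set.mem_setOf_eq, Set.mem_univ, iff_true]
    rw [hconst g]
    have : (0:ℝ) < |h g₀| := abs_pos.mpr hg₀ne
    linarith
  rw [this] at hfin
  exact Set.infinite_univ hfin
end

section
/- Let G be a group generated by a finite symmetric set S, and let t ≥ 2 be a real number. If f : G → ℝ is a non-negative function, then ∑_{g∈G} ∑_{s∈S} |f(gs⁻¹)^t − f(g)^t| ≤ 2t ∑_{g∈G} f(g)^{t−1} (∑_{s∈S} |f(gs⁻¹) − f(g)|), where both sides are allowed to be +∞ (interpreted in the extended reals). -/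
open scoped ENNReal

private lemma key_rpow_sub {t : ℝ} (ht : 1 ≤ t) {a b : ℝ} (ha : 0 ≤ a) (hb : 0 ≤ b)
    (hba : b ≤ a) : a ^ t - b ^ t ≤ t * a ^ (t - 1) * (a - b) := by
  rcases eq_or_lt_of_le ha with h0 | h0
  · have hb0 : b = 0 := le_antisymm (hba.trans h0.symm.le) hb
    simp [← h0, hb0, Real.zero_rpow (by linarith : t ≠ 0)]
  · have hx : (-1 : ℝ) ≤ b / a - 1 := by
      have : 0 ≤ b / a := div_nonneg hb ha
      linarith
    have hbern := one_add_mul_self_le_rpow_one_add hx ht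
    rw [show (1 : ℝ) + (b / a - 1) = b / a by ring] at hbern
    -- hbern : 1 + t * (b/a - 1) ≤ (b/a)^t
    have hpow : (b / a) ^ t = b ^ t / a ^ t :=
      Real.div_rpow hb ha t
    have hat : 0 < a ^ t := Real.rpow_pos_of_pos h0 t
    have hmul : a ^ t * (1 + t * (b / a - 1)) ≤ b ^ t := by
      calc a ^ t * (1 + t * (b / a - 1)) ≤ a ^ t * (b / a) ^ t :=
            mul_le_mul_of_nonneg_left hbern hat.le
        _ = b ^ t := by rw [hpow]; field_simp
    have hsplit : a ^ t = a ^ (t - 1) * a := by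
      rw [← Real.rpow_add_one h0.ne' (t - 1)]
      norm_num
    have hdiv : a ^ t * (b / a) = a ^ (t - 1) * b := by
      rw [hsplit]; field_simp
    nlinarith [hmul, hdiv]

private lemma abs_rpow_sub_rpow_le {t : ℝ} (ht : 1 ≤ t) {a b : ℝ} (ha : 0 ≤ a) (hb : 0 ≤ b) :
    |a ^ t - b ^ t| ≤ t * a ^ (t - 1) * |a - b| + t * b ^ (t - 1) * |a - b| := by
  have ht0 : (0 : ℝ) ≤ t := by linarith
  wlog h : b ≤ a generalizing a b
  · have := this hb ha (le_of_not_ge h)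
    rw [abs_sub_comm a b, abs_sub_comm (a ^ t)]
    linarith [this]
  have h1 : 0 ≤ a ^ t - b ^ t :=
    sub_nonneg.2 (Real.rpow_le_rpow hb h (by linarith))
  rw [abs_of_nonneg h1, abs_of_nonneg (sub_nonneg.2 h)]
  have := key_rpow_sub ht ha hb h
  have hbp : 0 ≤ b ^ (t - 1) := Real.rpow_nonneg hb _
  have h2 : 0 ≤ t * b ^ (t - 1) * (a - b) := by
    have := sub_nonneg.2 h; positivity
  linarith

/-- `‖f^t‖_{D(1)} ≤ 2t ∑_g f(g)^{t-1} (∑_{s∈S} |f(gs⁻¹) - f(g)|)`, in extended reals. -/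
theorem Dp_norm_rpow_le {G : Type*} [Group G] (S : Finset G)
    (hS_symm : ∀ s ∈ S, s⁻¹ ∈ S) (hS_gen : Subgroup.closure (S : Set G) = ⊤)
    (t : ℝ) (ht : 2 ≤ t) (f : G → ℝ) (hf : ∀ g : G, 0 ≤ f g) :
    ∑' g : G, ∑ s ∈ S, ENNReal.ofReal |f (g * s⁻¹) ^ t - f g ^ t| ≤
      ENNReal.ofReal (2 * t) *
        ∑' g : G, ENNReal.ofReal (f g ^ (t - 1) * ∑ s ∈ S, |f (g * s⁻¹) - f g|) := by
  have ht1 : (1 : ℝ) ≤ t := by linarith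
  have ht0 : (0 : ℝ) ≤ t := by linarith
  set B : G → G → ℝ≥0∞ := fun g s =>
    ENNReal.ofReal (t * f (g * s⁻¹) ^ (t - 1) * |f (g * s⁻¹) - f g|) with hB
  set C : G → G → ℝ≥0∞ := fun g s =>
    ENNReal.ofReal (t * f g ^ (t - 1) * |f (g * s⁻¹) - f g|) with hC
  -- pointwise bound
  have hpt : ∀ g s, ENNReal.ofReal |f (g * s⁻¹) ^ t - f g ^ t| ≤ B g s + C g s := by
    intro g s
    refine le_trans (ENNReal.ofReal_le_ofReal
      (abs_rpow_sub_rpow_le ht1 (hf _) (hf _))) ?_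
    exact ENNReal.ofReal_add_le
  -- the C part
  have hCsum : ∀ g, ∑ s ∈ S, C g s =
      ENNReal.ofReal t * ENNReal.ofReal (f g ^ (t - 1) * ∑ s ∈ S, |f (g * s⁻¹) - f g|) := by
    intro g
    have h1 : ∑ s ∈ S, C g s =
        ENNReal.ofReal (∑ s ∈ S, t * f g ^ (t - 1) * |f (g * s⁻¹) - f g|) :=
      (ENNReal.ofReal_sum_of_nonneg fun s _ =>
        mul_nonneg (mul_nonneg ht0 (Real.rpow_nonneg (hf g) _)) (abs_nonneg _)).symm
    rw [h1, ← ENNReal.ofReal_mul ht0]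
    congr 1
    rw [Finset.mul_sum, Finset.mul_sum]
    exact Finset.sum_congr rfl fun s _ => by ring
  -- B part equals C part after reindexing
  have hBC : ∑' g : G, ∑ s ∈ S, B g s = ∑' g : G, ∑ s ∈ S, C g s := by
    rw [Summable.tsum_finsetSum (fun s _ => ENNReal.summable), Summable.tsum_finsetSum (fun s _ => ENNReal.summable)]
    refine Finset.sum_nbij' (fun s => s⁻¹) (fun s => s⁻¹) hS_symm hS_symm
      (fun s _ => inv_inv s) (fun s _ => inv_inv s) (fun s hs => ?_)
    -- ∑' g, B g s = ∑' g, C g s⁻¹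
    rw [← Equiv.tsum_eq (Equiv.mulRight s) (fun g => B g s)]
    refine tsum_congr fun h => ?_
    simp only [hB, hC, Equiv.coe_mulRight, mul_inv_cancel_right, inv_inv]
    rw [abs_sub_comm]
  -- combine
  calc ∑' g : G, ∑ s ∈ S, ENNReal.ofReal |f (g * s⁻¹) ^ t - f g ^ t|
      ≤ ∑' g : G, ∑ s ∈ S, (B g s + C g s) :=
        ENNReal.tsum_le_tsum fun g => Finset.sum_le_sum fun s _ => hpt g s
    _ = (∑' g : G, ∑ s ∈ S, B g s) + ∑' g : G, ∑ s ∈ S, C g s := by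
        rw [← ENNReal.tsum_add]
        exact tsum_congr fun g => Finset.sum_add_distrib
    _ = 2 * ∑' g : G, ∑ s ∈ S, C g s := by rw [hBC]; ring
    _ = ENNReal.ofReal (2 * t) *
        ∑' g : G, ENNReal.ofReal (f g ^ (t - 1) * ∑ s ∈ S, |f (g * s⁻¹) - f g|) := by
        rw [ENNReal.ofReal_mul (by norm_num : (0:ℝ) ≤ 2)]
        simp only [hCsum]
        rw [ENNReal.tsum_mul_left, ENNReal.ofReal_ofNat, mul_assoc]
end

section
/- Let G be a group generated by a finite symmetric set S, let p be a real with 2 ≥ p > 1 (or more generally p > 1), and let d > p. Suppose G satisfies condition S_d: there exists C > 0 such that for all finitely supported f : G → ℝ, ‖f‖_{d/(d−1)} ≤ C ∑_{g∈G} ∑_{s∈S} |f(gs⁻¹) − f(g)|. Then there exists C' > 0 such that for all finitely supported f : G → ℝ, ‖f‖_{pd/(d−p)} ≤ C' (∑_{s∈S} ∑_{g∈G} |f(gs⁻¹) − f(g)|^p)^{1/p}. -/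
/-!
Apply `S_d` to `|f| ^ α` with `α = p (d - 1) / (d - p)`. The bound
`|a ^ α - b ^ α| ≤ α (a ^ (α - 1) + b ^ (α - 1)) |a - b|` and Hölder's inequality with exponents
`p / (p - 1)` and `p` bound the right-hand side by a constant times `A ^ ((p - 1) / p) ‖f‖_{D(p)}`,
where `A = ∑ |f| ^ q`, `q = p d / (d - p)`, because `(α - 1) p / (p - 1) = α d / (d - 1) = q`.
The left-hand side is `A ^ ((d - 1) / d)`, and dividing by `A ^ ((p - 1) / p)` leaves
`A ^ (1 / q)`.
-/

open Function

theorem rpow_sub_rpow_le_mul_rpow_sub_one {α x y : ℝ} (hα : 1 < α) (hx : 0 ≤ x) (hy : 0 ≤ y) :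
    x ^ α - y ^ α ≤ α * x ^ (α - 1) * (x - y) := by
  have hα0 : α ≠ 0 := by positivity
  have hα1 : α - 1 ≠ 0 := by linarith
  -- Young's inequality for `y` and `x ^ (α - 1)` is the tangent line bound for `t ↦ t ^ α` at `x`
  have hconj : α.HolderConjugate (α / (α - 1)) := .conjExponent hα
  have young := Real.young_inequality_of_nonneg hy (Real.rpow_nonneg hx (α - 1)) hconj
  rw [← Real.rpow_mul hx, show (α - 1) * (α / (α - 1)) = α by field_simp] at young
  have hxα : x ^ α = x ^ (α - 1) * x := by
    rw [← Real.rpow_add_one' hx (by simpa using hα0), sub_add_cancel]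
  rw [hxα] at young ⊢
  field_simp at young
  nlinarith

theorem abs_rpow_sub_rpow_le_s4 {α x y : ℝ} (hα : 1 < α) (hx : 0 ≤ x) (hy : 0 ≤ y) :
    |x ^ α - y ^ α| ≤ α * (x ^ (α - 1) + y ^ (α - 1)) * |x - y| := by
  have hxy := rpow_sub_rpow_le_mul_rpow_sub_one hα hx hy
  have hyx := rpow_sub_rpow_le_mul_rpow_sub_one hα hy hx
  have h1 : α * x ^ (α - 1) * (x - y) ≤ α * x ^ (α - 1) * |x - y| := by
    gcongr; exact le_abs_self _
  have h2 : α * y ^ (α - 1) * (y - x) ≤ α * y ^ (α - 1) * |x - y| := by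
    gcongr; exact abs_sub_comm x y ▸ le_abs_self _
  have h3 : 0 ≤ α * x ^ (α - 1) * |x - y| := by positivity
  have h4 : 0 ≤ α * y ^ (α - 1) * |x - y| := by positivity
  rw [abs_le]
  constructor <;> linarith

theorem sum_rpow_one_div_le_card_rpow_mul {ι : Type*} (s : Finset ι) {x : ι → ℝ}
    (hx : ∀ i ∈ s, 0 ≤ x i) {p : ℝ} (hp : 1 < p) :
    ∑ i ∈ s, x i ^ (1 / p) ≤ (s.card : ℝ) ^ ((p - 1) / p) * (∑ i ∈ s, x i) ^ (1 / p) := by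
  have hconj : p.HolderConjugate (p / (p - 1)) := .conjExponent hp
  have h := Real.inner_le_Lp_mul_Lq_of_nonneg s hconj.symm (f := fun _ => (1 : ℝ))
    (g := fun i => x i ^ (1 / p)) (fun _ _ => zero_le_one)
    (fun i hi => Real.rpow_nonneg (hx i hi) _)
  have hpow : ∀ i ∈ s, (x i ^ (1 / p)) ^ p = x i := fun i hi => by
    rw [← Real.rpow_mul (hx i hi), one_div_mul_cancel (by positivity), Real.rpow_one]
  simpa only [Real.one_rpow, one_mul, Finset.sum_const, nsmul_eq_mul, mul_one, one_div_div,
    Finset.sum_congr rfl hpow] using h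

theorem rpow_le_of_rpow_add_le_mul_rpow {A K b c : ℝ} (hA : 0 ≤ A) (hK : 0 ≤ K) (hc : 0 < c)
    (h : A ^ (c + b) ≤ K * A ^ b) : A ^ c ≤ K := by
  rcases hA.eq_or_lt with rfl | hA
  · rwa [Real.zero_rpow hc.ne']
  rw [Real.rpow_add hA] at h
  exact le_of_mul_le_mul_right h (Real.rpow_pos_of_pos hA b)

theorem tsum_rpow_mul_le {ι : Type*} {u v : ι → ℝ} (hu : ∀ i, 0 ≤ u i) (hv : ∀ i, 0 ≤ v i)
    {p a : ℝ} (hp : 1 < p) (hus : Summable fun i => u i ^ (a * (p / (p - 1))))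
    (hvs : Summable fun i => v i ^ p) :
    ∑' i, u i ^ a * v i ≤
      (∑' i, u i ^ (a * (p / (p - 1)))) ^ ((p - 1) / p) * (∑' i, v i ^ p) ^ (1 / p) := by
  simp only [Real.rpow_mul (hu _)] at hus ⊢
  have hconj : p.HolderConjugate (p / (p - 1)) := .conjExponent hp
  simpa only [one_div_div] using Real.inner_le_Lp_mul_Lq_tsum_of_nonneg hconj.symm
    (fun i => Real.rpow_nonneg (hu i) a) hv hus hvs

section Group

variable {G : Type*} [Group G] {f : G → ℝ}

theorem summable_comp_mul_inv_of_support_finite (hf : (support f).Finite) (s : G)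
    (φ : ℝ → ℝ → ℝ) (hφ : φ 0 0 = 0) : Summable fun g => φ (f (g * s⁻¹)) (f g) := by
  refine summable_of_hasFiniteSupport (((hf.image (· * s)).union hf).subset fun g hg => ?_)
  by_cases h : f (g * s⁻¹) = 0
  · refine Or.inr fun hg0 => hg ?_
    simp only [h, hg0, hφ]
  · exact Or.inl ⟨g * s⁻¹, h, inv_mul_cancel_right g s⟩

theorem tsum_abs_rpow_sub_rpow_le (hf : (support f).Finite) (s : G) {p α q : ℝ} (hp : 1 < p)
    (hα : 1 < α) (hq : (α - 1) * (p / (p - 1)) = q) :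
    ∑' g, |(|f (g * s⁻¹)| ^ α - |f g| ^ α)| ≤
      2 * α * (∑' g, |f g| ^ q) ^ ((p - 1) / p) *
        (∑' g, |f (g * s⁻¹) - f g| ^ p) ^ (1 / p) := by
  set A := ∑' g, |f g| ^ q
  set D := ∑' g, |f (g * s⁻¹) - f g| ^ p
  have hp0 : p ≠ 0 := by positivity
  have hq0 : q ≠ 0 := by rw [← hq]; exact mul_ne_zero (by linarith) (div_ne_zero hp0 (by linarith))
  have hsum (φ : ℝ → ℝ → ℝ) (hφ : φ 0 0 = 0) :=
    summable_comp_mul_inv_of_support_finite hf s φ hφ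
  have hD := hsum (fun a b => |a - b| ^ p) (by simp [hp0])
  have hA_shift : ∑' g, |f (g * s⁻¹)| ^ q = A := (Equiv.mulRight s⁻¹).tsum_eq fun g => |f g| ^ q
  have holder₁ : ∑' g, |f (g * s⁻¹)| ^ (α - 1) * |f (g * s⁻¹) - f g| ≤
      A ^ ((p - 1) / p) * D ^ (1 / p) := by
    simpa only [hq, hA_shift] using tsum_rpow_mul_le (fun g => abs_nonneg (f (g * s⁻¹)))
      (fun g => abs_nonneg _) hp (hsum (fun a _ => |a| ^ ((α - 1) * (p / (p - 1))))
        (by simp [hq, hq0])) hD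
  have holder₂ : ∑' g, |f g| ^ (α - 1) * |f (g * s⁻¹) - f g| ≤
      A ^ ((p - 1) / p) * D ^ (1 / p) := by
    simpa only [hq] using tsum_rpow_mul_le (fun g => abs_nonneg (f g))
      (fun g => abs_nonneg _) hp (hsum (fun _ b => |b| ^ ((α - 1) * (p / (p - 1))))
        (by simp [hq, hq0])) hD
  have hs₁ := hsum (fun a b => |a| ^ (α - 1) * |a - b|) (by simp)
  have hs₂ := hsum (fun a b => |b| ^ (α - 1) * |a - b|) (by simp)
  calc ∑' g, |(|f (g * s⁻¹)| ^ α - |f g| ^ α)|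
      ≤ ∑' g, (α * (|f (g * s⁻¹)| ^ (α - 1) * |f (g * s⁻¹) - f g|) +
          α * (|f g| ^ (α - 1) * |f (g * s⁻¹) - f g|)) := by
        refine Summable.tsum_le_tsum (fun g => ?_)
          (hsum (fun a b => |(|a| ^ α - |b| ^ α)|) (by simp))
          ((hs₁.mul_left α).add (hs₂.mul_left α))
        calc |(|f (g * s⁻¹)| ^ α - |f g| ^ α)|
            ≤ α * (|f (g * s⁻¹)| ^ (α - 1) + |f g| ^ (α - 1)) * |(|f (g * s⁻¹)| - |f g|)| :=
              abs_rpow_sub_rpow_le_s4 hα (abs_nonneg _) (abs_nonneg _)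
          _ ≤ α * (|f (g * s⁻¹)| ^ (α - 1) + |f g| ^ (α - 1)) * |f (g * s⁻¹) - f g| :=
              mul_le_mul_of_nonneg_left (abs_abs_sub_abs_le_abs_sub _ _) (by positivity)
          _ = _ := by ring
    _ = α * ∑' g, |f (g * s⁻¹)| ^ (α - 1) * |f (g * s⁻¹) - f g| +
          α * ∑' g, |f g| ^ (α - 1) * |f (g * s⁻¹) - f g| := by
        rw [(hs₁.mul_left α).tsum_add (hs₂.mul_left α), tsum_mul_left, tsum_mul_left]
    _ ≤ α * (A ^ ((p - 1) / p) * D ^ (1 / p)) + α * (A ^ ((p - 1) / p) * D ^ (1 / p)) := by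
        gcongr
    _ = 2 * α * A ^ ((p - 1) / p) * D ^ (1 / p) := by ring

theorem tsum_sum_abs_rpow_sub_rpow_le (hf : (support f).Finite) (S : Finset G) {p α q : ℝ}
    (hp : 1 < p) (hα : 1 < α) (hq : (α - 1) * (p / (p - 1)) = q) :
    ∑' g, ∑ s ∈ S, |(|f (g * s⁻¹)| ^ α - |f g| ^ α)| ≤
      2 * α * (S.card : ℝ) ^ ((p - 1) / p) * (∑' g, |f g| ^ q) ^ ((p - 1) / p) *
        (∑ s ∈ S, ∑' g, |f (g * s⁻¹) - f g| ^ p) ^ (1 / p) := by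
  rw [Summable.tsum_finsetSum fun s _ => summable_comp_mul_inv_of_support_finite hf s
    (fun a b => |(|a| ^ α - |b| ^ α)|) (by simp)]
  calc ∑ s ∈ S, ∑' g, |(|f (g * s⁻¹)| ^ α - |f g| ^ α)|
      ≤ ∑ s ∈ S, 2 * α * (∑' g, |f g| ^ q) ^ ((p - 1) / p) *
          (∑' g, |f (g * s⁻¹) - f g| ^ p) ^ (1 / p) :=
        Finset.sum_le_sum fun s _ => tsum_abs_rpow_sub_rpow_le hf s hp hα hq
    _ ≤ 2 * α * (∑' g, |f g| ^ q) ^ ((p - 1) / p) * ((S.card : ℝ) ^ ((p - 1) / p) *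
          (∑ s ∈ S, ∑' g, |f (g * s⁻¹) - f g| ^ p) ^ (1 / p)) := by
        rw [← Finset.mul_sum]
        gcongr
        exact sum_rpow_one_div_le_card_rpow_mul S (fun s _ => tsum_nonneg fun g => by positivity) hp
    _ = _ := by ring

theorem rpow_tsum_abs_rpow_le_of_sobolev {S : Finset G} {C d p : ℝ} (hC : 0 ≤ C)
    (hSd : ∀ f : G → ℝ, (support f).Finite →
      (∑' g, |f g| ^ (d / (d - 1))) ^ ((d - 1) / d) ≤ C * ∑' g, ∑ s ∈ S, |f (g * s⁻¹) - f g|)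
    (hp : 1 < p) (hpd : p < d) (hf : (support f).Finite) :
    (∑' g, |f g| ^ (p * d / (d - p))) ^ ((d - 1) / d) ≤
      C * (2 * (p * (d - 1) / (d - p)) * (S.card : ℝ) ^ ((p - 1) / p) *
        (∑' g, |f g| ^ (p * d / (d - p))) ^ ((p - 1) / p) *
          (∑ s ∈ S, ∑' g, |f (g * s⁻¹) - f g| ^ p) ^ (1 / p)) := by
  have hdp : 0 < d - p := sub_pos.2 hpd
  have hp1 : p - 1 ≠ 0 := by linarith
  have hd1 : d - 1 ≠ 0 := by linarith
  -- `α` is chosen so that `α * (d / (d - 1)) = (α - 1) * (p / (p - 1)) = p * d / (d - p)`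
  set α := p * (d - 1) / (d - p) with hαdef
  have hα : 1 < α := by rw [hαdef, lt_div_iff₀ hdp]; nlinarith
  have hq : (α - 1) * (p / (p - 1)) = p * d / (d - p) := by rw [hαdef]; field_simp; ring
  have hdq : α * (d / (d - 1)) = p * d / (d - p) := by rw [hαdef]; field_simp
  have hSd_pow := hSd (fun g => |f g| ^ α)
    (hf.subset fun g hg h0 => hg (by simp [h0, (zero_lt_one.trans hα).ne']))
  have hA : ∑' g, |(|f g| ^ α)| ^ (d / (d - 1)) = ∑' g, |f g| ^ (p * d / (d - p)) :=
    tsum_congr fun g => by rw [abs_of_nonneg (by positivity), ← Real.rpow_mul (abs_nonneg _), hdq]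
  rw [hA] at hSd_pow
  exact hSd_pow.trans
    (mul_le_mul_of_nonneg_left (tsum_sum_abs_rpow_sub_rpow_le hf S hp hα hq) hC)

end Group

theorem sobolev_Sd_to_Dp_general {G : Type*} [Group G] (S : Finset G)
    (p d : ℝ) (hp : 1 < p) (hpd : p < d)
    (C : ℝ) (hC : 0 < C)
    (hSd : ∀ f : G → ℝ, (Function.support f).Finite →
      (∑' g : G, |f g| ^ (d / (d - 1))) ^ ((d - 1) / d) ≤
        C * ∑' g : G, ∑ s ∈ S, |f (g * s⁻¹) - f g|) :
    ∃ C' : ℝ, 0 < C' ∧ ∀ f : G → ℝ, (Function.support f).Finite →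
      (∑' g : G, |f g| ^ (p * d / (d - p))) ^ ((d - p) / (p * d)) ≤
        C' * (∑ s ∈ S, ∑' g : G, |f (g * s⁻¹) - f g| ^ p) ^ (1 / p) := by
  have hdp : 0 < d - p := sub_pos.2 hpd
  have hp0 : 0 < p := by linarith
  have hd0 : 0 < d := by linarith
  have hα0 : 0 < p * (d - 1) / (d - p) := div_pos (mul_pos hp0 (by linarith)) hdp
  have hexp : (d - p) / (p * d) + (p - 1) / p = (d - 1) / d := by field_simp; ring
  refine ⟨2 * C * (p * (d - 1) / (d - p)) * ((S.card : ℝ) + 1) ^ ((p - 1) / p), by positivity,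
    fun f hf => ?_⟩
  calc (∑' g, |f g| ^ (p * d / (d - p))) ^ ((d - p) / (p * d))
      ≤ 2 * C * (p * (d - 1) / (d - p)) * (S.card : ℝ) ^ ((p - 1) / p) *
          (∑ s ∈ S, ∑' g, |f (g * s⁻¹) - f g| ^ p) ^ (1 / p) := by
        refine rpow_le_of_rpow_add_le_mul_rpow (b := (p - 1) / p)
          (tsum_nonneg fun g => by positivity) (by positivity) (div_pos hdp (by positivity)) ?_
        rw [hexp]
        exact (rpow_tsum_abs_rpow_le_of_sobolev hC.le hSd hp hpd hf).trans_eq (by ring)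
    _ ≤ 2 * C * (p * (d - 1) / (d - p)) * ((S.card : ℝ) + 1) ^ ((p - 1) / p) *
          (∑ s ∈ S, ∑' g, |f (g * s⁻¹) - f g| ^ p) ^ (1 / p) := by
        gcongr
        linarith

/-- Sobolev inequality upgrade: condition `S_d` implies the `L^{pd/(d-p)}`-bound by
the `D(p)`-seminorm, for finitely supported functions. -/
theorem sobolev_Sd_to_Dp {G : Type*} [Group G] (S : Finset G)
    (hS_symm : ∀ s ∈ S, s⁻¹ ∈ S) (hS_gen : Subgroup.closure (S : Set G) = ⊤)
    (p d : ℝ) (hp : 1 < p) (hpd : p < d)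
    (C : ℝ) (hC : 0 < C)
    (hSd : ∀ f : G → ℝ, (Function.support f).Finite →
      (∑' g : G, |f g| ^ (d / (d - 1))) ^ ((d - 1) / d) ≤
        C * ∑' g : G, ∑ s ∈ S, |f (g * s⁻¹) - f g|) :
    ∃ C' : ℝ, 0 < C' ∧ ∀ f : G → ℝ, (Function.support f).Finite →
      (∑' g : G, |f g| ^ (p * d / (d - p))) ^ ((d - p) / (p * d)) ≤
        C' * (∑ s ∈ S, ∑' g : G, |f (g * s⁻¹) - f g| ^ p) ^ (1 / p) :=
  sobolev_Sd_to_Dp_general S p d hp hpd C hC hSd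
end

section
/- Let G be a group generated by a finite symmetric set S, and suppose G is amenable in the Følner sense: there is an exhaustion G₁ ⊆ G₂ ⊆ ⋯ of G by finite subsets with ⋃ₖ Gₖ = G and |∂Gₖ|/|Gₖ| → 0, where ∂A = {x ∈ A : ∃ s ∈ S, xs ∉ A}. Then for every p ≥ 1 the functions fₖ = χ_{Gₖ}/|Gₖ|^{1/p} satisfy ‖fₖ‖_p = 1 for all k, while the D(p)-seminorms satisfy ∑_{s∈S} ∑_{g∈G} |fₖ(gs⁻¹) − fₖ(g)|^p ≤ 2|S| · |∂Gₖ|/|Gₖ| → 0. In particular, there is no constant C > 0 with ‖f‖_p ≤ C ‖f‖_{D(p)} for all finitely supported f. -/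
attribute [local instance] Classical.propDecidable
open Filter

/-- For an amenable group with Følner exhaustion `Gₖ`, the normalized indicator
functions `fₖ = χ_{Gₖ}/|Gₖ|^{1/p}` have `‖fₖ‖_p = 1` while their `D(p)`-seminorms
tend to `0`; hence no inequality `‖f‖_p ≤ C ‖f‖_{D(p)}` can hold. -/
theorem folner_no_poincare {G : Type*} [Group G] [Infinite G]
    (S : Finset G) (hS_symm : ∀ s ∈ S, s⁻¹ ∈ S)
    (hS_gen : Subgroup.closure (S : Set G) = ⊤)
    (p : ℝ) (hp : 1 ≤ p)
    (Gseq : ℕ → Finset G) (hmono : Monotone Gseq)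
    (hne : ∀ k, (Gseq k).Nonempty)
    (hexh : ∀ g : G, ∃ k, g ∈ Gseq k)
    (hfol : Tendsto
      (fun k => (((Gseq k).filter (fun x => ∃ s ∈ S, x * s ∉ Gseq k)).card : ℝ) /
        ((Gseq k).card : ℝ)) atTop (nhds 0))
    (f : ℕ → G → ℝ)
    (hf : ∀ k g, f k g =
      (if g ∈ Gseq k then (1 : ℝ) else 0) / ((Gseq k).card : ℝ) ^ (1 / p)) :
    (∀ k, (∑' g : G, |f k g| ^ p) ^ (1 / p) = 1) ∧
    (∀ k, ∑ s ∈ S, ∑' g : G, |f k (g * s⁻¹) - f k g| ^ p ≤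
      2 * (S.card : ℝ) *
        (((Gseq k).filter (fun x => ∃ s ∈ S, x * s ∉ Gseq k)).card : ℝ) /
          ((Gseq k).card : ℝ)) ∧
    Tendsto (fun k => ∑ s ∈ S, ∑' g : G, |f k (g * s⁻¹) - f k g| ^ p)
      atTop (nhds 0) ∧
    ¬ ∃ C : ℝ, 0 < C ∧ ∀ u : G → ℝ, (Function.support u).Finite →
      (∑' g : G, |u g| ^ p) ^ (1 / p) ≤
        C * (∑ s ∈ S, ∑' g : G, |u (g * s⁻¹) - u g| ^ p) ^ (1 / p) := by
  have hp0 : p ≠ 0 := by linarith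
  have hppos : (0 : ℝ) < p := by linarith
  set c : ℕ → ℝ := fun k => ((Gseq k).card : ℝ) with hc_def
  have hcpos : ∀ k, 0 < c k := fun k => by
    have := (hne k).card_pos
    simp only [hc_def]
    exact_mod_cast this
  -- the value m k = (c k ^ (1/p))⁻¹
  set m : ℕ → ℝ := fun k => ((c k) ^ (1 / p : ℝ))⁻¹ with hm_def
  have hmpos : ∀ k, 0 < m k := fun k => by
    have : (0:ℝ) < (c k) ^ (1/p : ℝ) := Real.rpow_pos_of_pos (hcpos k) _
    positivity
  have hm_pow : ∀ k, (m k) ^ p = (c k)⁻¹ := by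
    intro k
    show ((c k ^ (1/p : ℝ))⁻¹) ^ p = (c k)⁻¹
    rw [Real.inv_rpow (Real.rpow_nonneg (hcpos k).le _),
      ← Real.rpow_mul (hcpos k).le, one_div_mul_cancel hp0, Real.rpow_one]
  have hf_mem : ∀ k g, g ∈ Gseq k → f k g = m k := by
    intro k g hg
    rw [hf k g, if_pos hg, one_div]
  have hf_not : ∀ k g, g ∉ Gseq k → f k g = 0 := by
    intro k g hg
    rw [hf k g, if_neg hg, zero_div]
  have hf_nonneg : ∀ k g, 0 ≤ f k g := by
    intro k g
    by_cases hg : g ∈ Gseq k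
    · rw [hf_mem k g hg]; exact (hmpos k).le
    · rw [hf_not k g hg]
  have hf_le : ∀ k g, f k g ≤ m k := by
    intro k g
    by_cases hg : g ∈ Gseq k
    · rw [hf_mem k g hg]
    · rw [hf_not k g hg]; exact (hmpos k).le
  -- Part 1
  have part1 : ∀ k, (∑' g : G, |f k g| ^ p) ^ (1 / p : ℝ) = 1 := by
    intro k
    have hsum : (∑' g : G, |f k g| ^ p) = ∑ g ∈ Gseq k, |f k g| ^ p := by
      refine tsum_eq_sum ?_
      intro g hg
      rw [hf_not k g hg, abs_zero, Real.zero_rpow hp0]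
    rw [hsum]
    have : ∀ g ∈ Gseq k, |f k g| ^ p = (c k)⁻¹ := by
      intro g hg
      rw [hf_mem k g hg, abs_of_nonneg (hmpos k).le, hm_pow]
    rw [Finset.sum_congr rfl this, Finset.sum_const, nsmul_eq_mul]
    rw [mul_inv_cancel₀ (hcpos k).ne', Real.one_rpow]
  -- Part 2
  set Bd : ℕ → Finset G :=
    fun k => (Gseq k).filter (fun x => ∃ s ∈ S, x * s ∉ Gseq k) with hBd_def
  have part2 : ∀ k, ∑ s ∈ S, ∑' g : G, |f k (g * s⁻¹) - f k g| ^ p ≤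
      2 * (S.card : ℝ) * ((Bd k).card : ℝ) / c k := by
    intro k
    have hbound : ∀ s ∈ S, (∑' g : G, |f k (g * s⁻¹) - f k g| ^ p)
        ≤ 2 * ((Bd k).card : ℝ) * (c k)⁻¹ := by
      intro s hs
      set D : Finset G := Bd k ∪ (Bd k).image (· * s) with hD_def
      have hsupp : ∀ g : G, g ∉ D → |f k (g * s⁻¹) - f k g| ^ p = 0 := by
        intro g hg
        have heq : f k (g * s⁻¹) = f k g := by
          by_cases h1 : g ∈ Gseq k <;> by_cases h2 : g * s⁻¹ ∈ Gseq k
          · rw [hf_mem k _ h2, hf_mem k _ h1]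
          · exfalso
            apply hg
            apply Finset.mem_union_left
            rw [hBd_def, Finset.mem_filter]
            exact ⟨h1, s⁻¹, hS_symm s hs, h2⟩
          · exfalso
            apply hg
            apply Finset.mem_union_right
            rw [Finset.mem_image]
            refine ⟨g * s⁻¹, ?_, by simp⟩
            rw [hBd_def, Finset.mem_filter]
            refine ⟨h2, s, hs, ?_⟩
            simpa using h1
          · rw [hf_not k _ h2, hf_not k _ h1]
        rw [heq, sub_self, abs_zero, Real.zero_rpow hp0]
      have htsum : (∑' g : G, |f k (g * s⁻¹) - f k g| ^ p)
          = ∑ g ∈ D, |f k (g * s⁻¹) - f k g| ^ p := tsum_eq_sum hsupp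
      rw [htsum]
      have hterm : ∀ g ∈ D, |f k (g * s⁻¹) - f k g| ^ p ≤ (c k)⁻¹ := by
        intro g _
        rw [← hm_pow k]
        apply Real.rpow_le_rpow (abs_nonneg _) _ hppos.le
        rw [abs_sub_le_iff]
        constructor
        · have := hf_le k (g * s⁻¹); have := hf_nonneg k g; linarith
        · have := hf_le k g; have := hf_nonneg k (g * s⁻¹); linarith
      calc ∑ g ∈ D, |f k (g * s⁻¹) - f k g| ^ p
          ≤ ∑ _g ∈ D, (c k)⁻¹ := Finset.sum_le_sum hterm
        _ = (D.card : ℝ) * (c k)⁻¹ := by rw [Finset.sum_const, nsmul_eq_mul]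
        _ ≤ 2 * ((Bd k).card : ℝ) * (c k)⁻¹ := by
            apply mul_le_mul_of_nonneg_right _ (by positivity)
            have hDcard : D.card ≤ (Bd k).card + (Bd k).card :=
              le_trans (Finset.card_union_le _ _)
                (Nat.add_le_add le_rfl Finset.card_image_le)
            have : (D.card : ℝ) ≤ ((Bd k).card : ℝ) + ((Bd k).card : ℝ) := by
              exact_mod_cast hDcard
            linarith
    calc ∑ s ∈ S, ∑' g : G, |f k (g * s⁻¹) - f k g| ^ p
        ≤ ∑ _s ∈ S, 2 * ((Bd k).card : ℝ) * (c k)⁻¹ :=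
          Finset.sum_le_sum hbound
      _ = (S.card : ℝ) * (2 * ((Bd k).card : ℝ) * (c k)⁻¹) := by
          rw [Finset.sum_const, nsmul_eq_mul]
      _ = 2 * (S.card : ℝ) * ((Bd k).card : ℝ) / c k := by
          rw [div_eq_mul_inv]; ring
  -- Part 3
  have hnonneg : ∀ k, 0 ≤ ∑ s ∈ S, ∑' g : G, |f k (g * s⁻¹) - f k g| ^ p := by
    intro k
    apply Finset.sum_nonneg
    intro s _
    apply tsum_nonneg
    intro g
    positivity
  have part3 : Tendsto (fun k => ∑ s ∈ S, ∑' g : G, |f k (g * s⁻¹) - f k g| ^ p)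
      atTop (nhds 0) := by
    apply squeeze_zero hnonneg (fun k => ?_)
      (by simpa using hfol.const_mul (2 * (S.card : ℝ)))
    calc ∑ s ∈ S, ∑' g : G, |f k (g * s⁻¹) - f k g| ^ p
        ≤ 2 * (S.card : ℝ) * ((Bd k).card : ℝ) / c k := part2 k
      _ = 2 * (S.card : ℝ) * (((Bd k).card : ℝ) / c k) := by
          rw [mul_div_assoc]
  refine ⟨part1, part2, part3, ?_⟩
  rintro ⟨C, hC, hineq⟩
  have hfin : ∀ k, (Function.support (f k)).Finite := by
    intro k
    apply Set.Finite.subset (Gseq k).finite_toSet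
    intro g hg
    by_contra hgk
    exact hg (hf_not k g hgk)
  have h1 : ∀ k, (1 : ℝ) ≤
      C * (∑ s ∈ S, ∑' g : G, |f k (g * s⁻¹) - f k g| ^ p) ^ (1 / p : ℝ) := by
    intro k
    have := hineq (f k) (hfin k)
    rwa [part1 k] at this
  have htend : Tendsto (fun k =>
      C * (∑ s ∈ S, ∑' g : G, |f k (g * s⁻¹) - f k g| ^ p) ^ (1 / p : ℝ))
      atTop (nhds 0) := by
    have := (part3.rpow_const (Or.inr (by positivity : (0:ℝ) ≤ 1/p))).const_mul C
    rwa [Real.zero_rpow (by positivity : (1/p : ℝ) ≠ 0), mul_zero] at this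
  have := htend.eventually_lt_const (by norm_num : (0:ℝ) < 1)
  obtain ⟨k, hk⟩ := this.exists
  exact absurd (h1 k) (not_le.mpr hk)
end

section
/- Let G be a group generated by a finite symmetric set S, p > 1, and let f₁, f₂ ∈ D^p(G). Then ⟨Δ_p f₁ − Δ_p f₂, f₁ − f₂⟩ = 0 if and only if f₁(gs⁻¹) − f₁(g) = f₂(gs⁻¹) − f₂(g) for all g ∈ G and s ∈ S. Moreover, if the difference functions differ for some s ∈ S, then ⟨Δ_p f₁ − Δ_p f₂, f₁ − f₂⟩ > 0. -/
section aux

variable {p : ℝ}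

private lemma phi_eq (hp : 1 < p) {x : ℝ} (hx : 0 ≤ x) :
    |x| ^ (p - 2) * x = x ^ (p - 1) := by
  rw [abs_of_nonneg hx, show p - 1 = (p - 2) + 1 by ring,
    Real.rpow_add_one' hx (by norm_num; linarith)]

private lemma phi_neg (x : ℝ) : |(-x)| ^ (p - 2) * (-x) = -(|x| ^ (p - 2) * x) := by
  rw [abs_neg]; ring

private lemma phi_strictMono (hp : 1 < p) {x y : ℝ} (hxy : x < y) :
    |x| ^ (p - 2) * x < |y| ^ (p - 2) * y := by
  have key : ∀ x y : ℝ, 0 ≤ x → x < y →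
      |x| ^ (p - 2) * x < |y| ^ (p - 2) * y := by
    intro x y hx hxy
    rw [phi_eq hp hx, phi_eq hp (hx.trans hxy.le)]
    exact Real.rpow_lt_rpow hx hxy (by linarith)
  rcases le_or_gt 0 x with hx | hx
  · exact key x y hx hxy
  · rcases le_or_gt y 0 with hy | hy
    · have h := key (-y) (-x) (by linarith) (by linarith)
      rw [phi_neg, phi_neg] at h
      linarith
    · have h1 : |x| ^ (p - 2) * x < 0 := by
        have h := key 0 (-x) le_rfl (by linarith)
        rw [phi_neg] at h
        simp only [abs_zero, mul_zero] at h
        linarith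
      have h2 : 0 < |y| ^ (p - 2) * y := by
        have h := key 0 y le_rfl hy
        simpa using h
      linarith

private lemma term_nonneg (hp : 1 < p) (x y : ℝ) :
    0 ≤ (|x| ^ (p - 2) * x - |y| ^ (p - 2) * y) * (x - y) := by
  rcases lt_trichotomy x y with h | h | h
  · have := phi_strictMono hp h
    nlinarith
  · simp [h]
  · have := phi_strictMono hp h
    nlinarith

private lemma term_pos (hp : 1 < p) {x y : ℝ} (hxy : x ≠ y) :
    0 < (|x| ^ (p - 2) * x - |y| ^ (p - 2) * y) * (x - y) := by
  rcases lt_or_gt_of_ne hxy with h | h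
  · have := phi_strictMono hp h
    nlinarith
  · have := phi_strictMono hp h
    nlinarith

private lemma abs_phi (hp : 1 < p) (x : ℝ) : |(|x| ^ (p - 2) * x)| = |x| ^ (p - 1) := by
  rw [abs_mul, abs_of_nonneg (Real.rpow_nonneg (abs_nonneg x) _)]
  have := phi_eq hp (abs_nonneg x)
  rwa [abs_abs] at this

private lemma term_le (hp : 1 < p) (x y : ℝ) :
    (|x| ^ (p - 2) * x - |y| ^ (p - 2) * y) * (x - y) ≤ 4 * (|x| ^ p + |y| ^ p) := by
  set M : ℝ := max |x| |y| with hM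
  have hM0 : 0 ≤ M := le_trans (abs_nonneg x) (le_max_left _ _)
  have hb1 : |x| ^ (p - 1) ≤ M ^ (p - 1) :=
    Real.rpow_le_rpow (abs_nonneg x) (le_max_left _ _) (by linarith)
  have hb2 : |y| ^ (p - 1) ≤ M ^ (p - 1) :=
    Real.rpow_le_rpow (abs_nonneg y) (le_max_right _ _) (by linarith)
  have hxM : |x| ≤ M := le_max_left _ _
  have hyM : |y| ≤ M := le_max_right _ _
  have hMp : M ^ (p - 1) * M = M ^ p := by
    rw [← Real.rpow_add_one' hM0 (by linarith : p - 1 + 1 ≠ 0)]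
    norm_num
  have hMple : M ^ p ≤ |x| ^ p + |y| ^ p := by
    rcases max_cases |x| |y| with ⟨h, _⟩ | ⟨h, _⟩
    · rw [hM, h]
      have := Real.rpow_nonneg (abs_nonneg y) p
      linarith
    · rw [hM, h]
      have := Real.rpow_nonneg (abs_nonneg x) p
      linarith
  calc (|x| ^ (p - 2) * x - |y| ^ (p - 2) * y) * (x - y)
      ≤ |(|x| ^ (p - 2) * x - |y| ^ (p - 2) * y) * (x - y)| := le_abs_self _
    _ ≤ (|(|x| ^ (p - 2) * x)| + |(|y| ^ (p - 2) * y)|) * (|x| + |y|) := by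
        rw [abs_mul]
        exact mul_le_mul (abs_sub _ _) (abs_sub _ _) (abs_nonneg _) (by positivity)
    _ = (|x| ^ (p - 1) + |y| ^ (p - 1)) * (|x| + |y|) := by
        rw [abs_phi hp, abs_phi hp]
    _ ≤ (M ^ (p - 1) + M ^ (p - 1)) * (M + M) := by
        apply mul_le_mul (by linarith) (by linarith) (by positivity)
        positivity
    _ = 4 * (M ^ (p - 1) * M) := by ring
    _ = 4 * M ^ p := by rw [hMp]
    _ ≤ 4 * (|x| ^ p + |y| ^ p) := by linarith

end aux

/-- Strict monotonicity of the `p`-Laplacian pairing: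
`⟨Δ_p f₁ − Δ_p f₂, f₁ − f₂⟩ = 0` iff the difference functions of `f₁` and `f₂`
agree, and the pairing is strictly positive otherwise. -/
theorem pLaplacian_strict_monotone {G : Type*} [Group G] (S : Finset G)
    (hS_symm : ∀ s ∈ S, s⁻¹ ∈ S) (hS_gen : Subgroup.closure (S : Set G) = ⊤)
    (p : ℝ) (hp : 1 < p) (f₁ f₂ : G → ℝ)
    (hf₁ : ∀ s ∈ S, Summable fun g : G => |f₁ (g * s⁻¹) - f₁ g| ^ p)
    (hf₂ : ∀ s ∈ S, Summable fun g : G => |f₂ (g * s⁻¹) - f₂ g| ^ p) :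
    ((∑' g : G, ∑ s ∈ S,
        (|f₁ (g * s⁻¹) - f₁ g| ^ (p - 2) * (f₁ (g * s⁻¹) - f₁ g) -
         |f₂ (g * s⁻¹) - f₂ g| ^ (p - 2) * (f₂ (g * s⁻¹) - f₂ g)) *
        ((f₁ (g * s⁻¹) - f₁ g) - (f₂ (g * s⁻¹) - f₂ g))) = 0 ↔
      ∀ g : G, ∀ s ∈ S, f₁ (g * s⁻¹) - f₁ g = f₂ (g * s⁻¹) - f₂ g) ∧
    ((∃ s ∈ S, ∃ g : G, f₁ (g * s⁻¹) - f₁ g ≠ f₂ (g * s⁻¹) - f₂ g) →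
      0 < ∑' g : G, ∑ s ∈ S,
        (|f₁ (g * s⁻¹) - f₁ g| ^ (p - 2) * (f₁ (g * s⁻¹) - f₁ g) -
         |f₂ (g * s⁻¹) - f₂ g| ^ (p - 2) * (f₂ (g * s⁻¹) - f₂ g)) *
        ((f₁ (g * s⁻¹) - f₁ g) - (f₂ (g * s⁻¹) - f₂ g))) := by
  have hTsummable : ∀ s ∈ S, Summable (fun g : G =>
      (|f₁ (g * s⁻¹) - f₁ g| ^ (p - 2) * (f₁ (g * s⁻¹) - f₁ g) -
       |f₂ (g * s⁻¹) - f₂ g| ^ (p - 2) * (f₂ (g * s⁻¹) - f₂ g)) *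
      ((f₁ (g * s⁻¹) - f₁ g) - (f₂ (g * s⁻¹) - f₂ g))) := by
    intro s hs
    apply Summable.of_nonneg_of_le (fun g => term_nonneg hp _ _)
      (fun g => term_le hp (f₁ (g * s⁻¹) - f₁ g) (f₂ (g * s⁻¹) - f₂ g))
    exact ((hf₁ s hs).add (hf₂ s hs)).mul_left 4
  have hFsummable : Summable (fun g : G => ∑ s ∈ S,
      (|f₁ (g * s⁻¹) - f₁ g| ^ (p - 2) * (f₁ (g * s⁻¹) - f₁ g) -
       |f₂ (g * s⁻¹) - f₂ g| ^ (p - 2) * (f₂ (g * s⁻¹) - f₂ g)) *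
      ((f₁ (g * s⁻¹) - f₁ g) - (f₂ (g * s⁻¹) - f₂ g))) :=
    summable_sum hTsummable
  have hFnonneg : ∀ g : G, 0 ≤ ∑ s ∈ S,
      (|f₁ (g * s⁻¹) - f₁ g| ^ (p - 2) * (f₁ (g * s⁻¹) - f₁ g) -
       |f₂ (g * s⁻¹) - f₂ g| ^ (p - 2) * (f₂ (g * s⁻¹) - f₂ g)) *
      ((f₁ (g * s⁻¹) - f₁ g) - (f₂ (g * s⁻¹) - f₂ g)) :=
    fun g => Finset.sum_nonneg fun s _ => term_nonneg hp _ _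
  have hpos : (∃ s ∈ S, ∃ g : G, f₁ (g * s⁻¹) - f₁ g ≠ f₂ (g * s⁻¹) - f₂ g) →
      0 < ∑' g : G, ∑ s ∈ S,
        (|f₁ (g * s⁻¹) - f₁ g| ^ (p - 2) * (f₁ (g * s⁻¹) - f₁ g) -
         |f₂ (g * s⁻¹) - f₂ g| ^ (p - 2) * (f₂ (g * s⁻¹) - f₂ g)) *
        ((f₁ (g * s⁻¹) - f₁ g) - (f₂ (g * s⁻¹) - f₂ g)) := by
    rintro ⟨s, hs, g, hne⟩
    refine Summable.tsum_pos hFsummable hFnonneg g ?_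
    refine Finset.sum_pos' (fun t _ => term_nonneg hp _ _) ⟨s, hs, ?_⟩
    exact term_pos hp hne
  refine ⟨⟨?_, ?_⟩, hpos⟩
  · intro h0 g s hs
    by_contra hne
    exact absurd h0 (ne_of_gt (hpos ⟨s, hs, g, hne⟩))
  · intro h
    have hz : ∀ g : G, (∑ s ∈ S,
        (|f₁ (g * s⁻¹) - f₁ g| ^ (p - 2) * (f₁ (g * s⁻¹) - f₁ g) -
         |f₂ (g * s⁻¹) - f₂ g| ^ (p - 2) * (f₂ (g * s⁻¹) - f₂ g)) *
        ((f₁ (g * s⁻¹) - f₁ g) - (f₂ (g * s⁻¹) - f₂ g))) = 0 := by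
      intro g
      apply Finset.sum_eq_zero
      intro s hs
      rw [h g s hs]
      ring
    simp only [hz, tsum_zero]
end

section
/- Let G be a finitely generated nonamenable group with finite symmetric generating set S, and let p ≥ 1. Assume the Gerl inequality: there exists C_p > 0 such that ‖u‖_p ≤ C_p ‖u‖_{D(p)} for all finitely supported u : G → ℝ. Then L^p(G), viewed as a subspace of D^p(G)/ℝ with the norm ‖f‖_{D(p)} = (∑_{s∈S} ∑_{g∈G} |f(gs⁻¹) − f(g)|^p)^{1/p}, is closed: if fₙ ∈ ℝG (finitely supported functions) and fₙ → f in D^p(G)/ℝ, then there exists f̄ ∈ L^p(G) representing the same class as f, i.e., f − f̄ is constant. -/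
open Filter ENNReal

/-- If the Gerl inequality `‖u‖_p ≤ C_p ‖u‖_{D(p)}` holds for finitely supported
functions (nonamenability), then `L^p(G)` is closed in `D^p(G)/ℝ`: a `D(p)`-limit
of finitely supported functions agrees with an `L^p` function up to a constant. -/
theorem lp_closed_in_Dp_of_gerl {G : Type*} [Group G] [Infinite G]
    (S : Finset G) (hS_symm : ∀ s ∈ S, s⁻¹ ∈ S)
    (hS_gen : Subgroup.closure (S : Set G) = ⊤)
    (p : ℝ) (hp : 1 ≤ p)
    (Cp : ℝ) (hCp : 0 < Cp)
    (hgerl : ∀ u : G → ℝ, (Function.support u).Finite →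
      (∑' g : G, |u g| ^ p) ^ (1 / p) ≤
        Cp * (∑ s ∈ S, ∑' g : G, |u (g * s⁻¹) - u g| ^ p) ^ (1 / p))
    (f : G → ℝ) (hf : ∀ s ∈ S, Summable fun g : G => |f (g * s⁻¹) - f g| ^ p)
    (fn : ℕ → G → ℝ) (hfn : ∀ n, (Function.support (fn n)).Finite)
    (hconv : Tendsto (fun n =>
      (∑ s ∈ S, ∑' g : G,
        |(f (g * s⁻¹) - fn n (g * s⁻¹)) - (f g - fn n g)| ^ p) ^ (1 / p))
      atTop (nhds 0)) :
    ∃ fbar : G → ℝ, Summable (fun g : G => |fbar g| ^ p) ∧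
      ∃ c : ℝ, ∀ g : G, f g - fbar g = c := by
  classical
  have hp0 : (0:ℝ) < p := lt_of_lt_of_le one_pos hp
  set q : ℝ≥0∞ := ENNReal.ofReal p with hq
  have hqt : q.toReal = p := ENNReal.toReal_ofReal hp0.le
  have hptq : 0 < q.toReal := by rw [hqt]; exact hp0
  have hq0 : q ≠ 0 := by
    simp only [hq, ne_eq, ENNReal.ofReal_eq_zero, not_le]; exact hp0
  haveI : Fact (1 ≤ q) := ⟨by rw [hq]; exact ENNReal.one_le_ofReal.mpr hp⟩
  -- norm bridge on G
  have normG : ∀ v : lp (fun _ : G => ℝ) q,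
      ‖v‖ = (∑' g : G, |v g| ^ p) ^ (1 / p) := by
    intro v
    rw [lp.norm_eq_tsum_rpow hptq, hqt]
    simp [Real.norm_eq_abs]
  -- norm bridge on ↥S × G
  have normSG : ∀ (w : lp (fun _ : ↥S × G => ℝ) q) (φ : G → G → ℝ),
      (∀ x : ↥S × G, (w : ∀ _ : ↥S × G, ℝ) x = φ x.1 x.2) →
      ‖w‖ = (∑ s ∈ S, ∑' g : G, |φ s g| ^ p) ^ (1 / p) := by
    intro w φ hw
    rw [lp.norm_eq_tsum_rpow hptq, hqt]
    congr 1
    have hsum : Summable fun x : ↥S × G => ‖(w : ∀ _ : ↥S × G, ℝ) x‖ ^ p := by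
      have := (lp.memℓp w).summable hptq; rwa [hqt] at this
    calc ∑' x : ↥S × G, ‖(w : ∀ _ : ↥S × G, ℝ) x‖ ^ p
        = ∑' (s : ↥S) (g : G), ‖(w : ∀ _ : ↥S × G, ℝ) (s, g)‖ ^ p :=
          Summable.tsum_prod' hsum hsum.prod_factor
      _ = ∑ s : ↥S, ∑' g : G, |φ (↑s) g| ^ p := by
          rw [tsum_fintype]
          refine Finset.sum_congr rfl fun s _ => ?_
          refine tsum_congr fun g => ?_
          rw [hw (s, g), Real.norm_eq_abs]
      _ = ∑ s ∈ S, ∑' g : G, |φ s g| ^ p := Finset.sum_coe_sort S (fun s => ∑' g : G, |φ s g| ^ p)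
  -- membership of finitely supported functions
  have memfin : ∀ u : G → ℝ, (Function.support u).Finite → Memℓp u q := by
    intro u hu
    apply memℓp_gen
    apply summable_of_finite_support
    apply hu.subset
    intro g hg
    simp only [Function.mem_support, ne_eq] at hg ⊢
    intro h0
    apply hg
    rw [h0, norm_zero]
    exact Real.zero_rpow (by rw [hqt]; exact hp0.ne')
  -- difference operator membership for f
  have memDf : Memℓp (fun x : ↥S × G => f (x.2 * (↑x.1)⁻¹) - f x.2) q := by
    apply memℓp_gen
    have key : Summable fun x : ↥S × G => |f (x.2 * (↑x.1)⁻¹) - f x.2| ^ p := by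
      refine (summable_prod_of_nonneg ?_).mpr ⟨fun s => hf (↑s) s.2, Summable.of_finite⟩
      intro x
      positivity
    refine key.congr fun x => ?_
    rw [hqt, Real.norm_eq_abs]
  -- difference operator membership for fn n
  have memDn : ∀ n, Memℓp (fun x : ↥S × G => fn n (x.2 * (↑x.1)⁻¹) - fn n x.2) q := by
    intro n
    apply memℓp_gen
    have key : Summable fun x : ↥S × G => |fn n (x.2 * (↑x.1)⁻¹) - fn n x.2| ^ p := by
      refine (summable_prod_of_nonneg (fun x => by positivity)).mpr
        ⟨fun s => ?_, Summable.of_finite⟩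
      apply summable_of_finite_support
      have : Function.support (fun g : G => |fn n (g * (↑s:G)⁻¹) - fn n g| ^ p) ⊆
          (Function.support (fn n)) ∪ ((fun a => a * (↑s:G)) '' Function.support (fn n)) := by
        intro g hg
        simp only [Function.mem_support, ne_eq] at hg
        by_contra hcon
        simp only [Set.mem_union, Set.mem_image, Function.mem_support, ne_eq, not_or,
          not_exists, not_and] at hcon
        obtain ⟨h1, h2⟩ := hcon
        have hfn1 : fn n g = 0 := by by_contra h; exact h1 h
        have hfn2 : fn n (g * (↑s:G)⁻¹) = 0 := by
          by_contra h
          exact h2 (g * (↑s:G)⁻¹) h (by group)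
        apply hg
        rw [hfn1, hfn2]
        simp [Real.zero_rpow hp0.ne']
      exact ((hfn n).union ((hfn n).image _)).subset this
    refine key.congr fun x => ?_
    rw [hqt, Real.norm_eq_abs]
  -- lp elements
  let xn : ℕ → lp (fun _ : G => ℝ) q := fun n => ⟨fn n, memfin (fn n) (hfn n)⟩
  let Ff : lp (fun _ : ↥S × G => ℝ) q := ⟨_, memDf⟩
  let Fn : ℕ → lp (fun _ : ↥S × G => ℝ) q := fun n => ⟨_, memDn n⟩
  -- the D(p) distance equals hconv expression
  have hd : ∀ n, ‖Ff - Fn n‖ = (∑ s ∈ S, ∑' g : G,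
      |(f (g * s⁻¹) - fn n (g * s⁻¹)) - (f g - fn n g)| ^ p) ^ (1 / p) := by
    intro n
    apply normSG (Ff - Fn n)
      (fun s g => (f (g * s⁻¹) - fn n (g * s⁻¹)) - (f g - fn n g))
    intro x
    have : (↑(Ff - Fn n) : ∀ _ : ↥S × G, ℝ) x = (↑Ff : ∀ _ : ↥S × G, ℝ) x -
        (↑(Fn n) : ∀ _ : ↥S × G, ℝ) x := by rw [lp.coeFn_sub]; rfl
    rw [this]
    show (f (x.2 * (↑x.1)⁻¹) - f x.2) - (fn n (x.2 * (↑x.1)⁻¹) - fn n x.2) = _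
    ring
  have hdconv : Tendsto (fun n => ‖Ff - Fn n‖) atTop (nhds 0) := by
    simpa only [hd] using hconv
  -- Gerl in lp form
  have hG : ∀ n m, ‖xn n - xn m‖ ≤ Cp * ‖Fn n - Fn m‖ := by
    intro n m
    have hsupp : (Function.support (fun g => fn n g - fn m g)).Finite := by
      apply ((hfn n).union (hfn m)).subset
      intro g hg
      simp only [Function.mem_support, ne_eq] at hg
      by_contra hcon
      simp only [Set.mem_union, Function.mem_support, ne_eq, not_or, not_not] at hcon
      apply hg; rw [hcon.1, hcon.2]; ring
    have h1 : ‖xn n - xn m‖ = (∑' g : G, |fn n g - fn m g| ^ p) ^ (1 / p) := by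
      rw [normG]
      rfl
    have h2 : ‖Fn n - Fn m‖ = (∑ s ∈ S, ∑' g : G,
        |(fn n (g * s⁻¹) - fn m (g * s⁻¹)) - (fn n g - fn m g)| ^ p) ^ (1 / p) := by
      apply normSG
      intro x
      have : (↑(Fn n - Fn m) : ∀ _ : ↥S × G, ℝ) x = (↑(Fn n) : ∀ _ : ↥S × G, ℝ) x -
          (↑(Fn m) : ∀ _ : ↥S × G, ℝ) x := by rw [lp.coeFn_sub]; rfl
      rw [this]
      show (fn n (x.2 * (↑x.1)⁻¹) - fn n x.2) - (fn m (x.2 * (↑x.1)⁻¹) - fn m x.2) = _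
      ring
    rw [h1, h2]
    exact hgerl (fun g => fn n g - fn m g) hsupp
  -- Cauchy sequence
  have hcauchy : CauchySeq xn := by
    rw [Metric.cauchySeq_iff]
    intro ε hε
    obtain ⟨N, hN⟩ := (Metric.tendsto_atTop.mp hdconv) (ε / (2 * Cp))
      (by positivity)
    refine ⟨N, fun n hn m hm => ?_⟩
    have hnm : ‖Fn n - Fn m‖ ≤ ‖Ff - Fn n‖ + ‖Ff - Fn m‖ := by
      have : Fn n - Fn m = (Ff - Fn m) - (Ff - Fn n) := by abel
      rw [this]
      calc ‖(Ff - Fn m) - (Ff - Fn n)‖ ≤ ‖Ff - Fn m‖ + ‖Ff - Fn n‖ := norm_sub_le _ _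
        _ = ‖Ff - Fn n‖ + ‖Ff - Fn m‖ := by ring
    have hNn := hN n hn
    have hNm := hN m hm
    rw [Real.dist_eq, sub_zero] at hNn hNm
    rw [abs_of_nonneg (norm_nonneg _)] at hNn hNm
    rw [dist_eq_norm]
    calc ‖xn n - xn m‖ ≤ Cp * ‖Fn n - Fn m‖ := hG n m
      _ ≤ Cp * (‖Ff - Fn n‖ + ‖Ff - Fn m‖) := by
          apply mul_le_mul_of_nonneg_left hnm hCp.le
      _ < Cp * (ε / (2 * Cp) + ε / (2 * Cp)) := by
          apply mul_lt_mul_of_pos_left (by linarith) hCp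
      _ = ε := by field_simp; ring
  obtain ⟨x, hx⟩ := cauchySeq_tendsto_of_complete hcauchy
  -- pointwise convergence
  have hxnorm : Tendsto (fun n => ‖xn n - x‖) atTop (nhds 0) :=
    tendsto_iff_norm_sub_tendsto_zero.mp hx
  have hpt : ∀ g : G, Tendsto (fun n => fn n g) atTop
      (nhds ((x : ∀ _ : G, ℝ) g)) := by
    intro g
    have h0 : Tendsto (fun n => fn n g - (x : ∀ _ : G, ℝ) g) atTop (nhds 0) := by
      apply squeeze_zero_norm _ hxnorm
      intro n
      have : fn n g - (x : ∀ _ : G, ℝ) g = (↑(xn n - x) : ∀ _ : G, ℝ) g := by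
        rw [lp.coeFn_sub]; rfl
      rw [this]
      exact lp.norm_apply_le_norm hq0 (xn n - x) g
    have := h0.add_const ((x : ∀ _ : G, ℝ) g)
    simpa using this
  -- h := f - x has vanishing differences
  set h : G → ℝ := fun g => f g - (x : ∀ _ : G, ℝ) g with hh
  have key : ∀ s ∈ S, ∀ g : G, h (g * s⁻¹) = h g := by
    intro s hs g
    have ha : Tendsto (fun n => (f (g * s⁻¹) - f g) - (fn n (g * s⁻¹) - fn n g))
        atTop (nhds 0) := by
      apply squeeze_zero_norm _ hdconv
      intro n
      have heq : (f (g * s⁻¹) - f g) - (fn n (g * s⁻¹) - fn n g) =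
          (↑(Ff - Fn n) : ∀ _ : ↥S × G, ℝ) (⟨s, hs⟩, g) := by
        have : (↑(Ff - Fn n) : ∀ _ : ↥S × G, ℝ) (⟨s, hs⟩, g) =
            (↑Ff : ∀ _ : ↥S × G, ℝ) (⟨s, hs⟩, g) -
            (↑(Fn n) : ∀ _ : ↥S × G, ℝ) (⟨s, hs⟩, g) := by rw [lp.coeFn_sub]; rfl
        rw [this]
      rw [heq]
      exact lp.norm_apply_le_norm hq0 (Ff - Fn n) (⟨s, hs⟩, g)
    have hb : Tendsto (fun n => (f (g * s⁻¹) - f g) - (fn n (g * s⁻¹) - fn n g))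
        atTop (nhds ((f (g * s⁻¹) - f g) -
          ((x : ∀ _ : G, ℝ) (g * s⁻¹) - (x : ∀ _ : G, ℝ) g))) := by
      exact tendsto_const_nhds.sub ((hpt (g * s⁻¹)).sub (hpt g))
    have := tendsto_nhds_unique hb ha
    simp only [hh]
    have hxx : f (g * s⁻¹) - f g = (x : ∀ _ : G, ℝ) (g * s⁻¹) - (x : ∀ _ : G, ℝ) g := by
      linarith [this]
    linarith [hxx]
  -- constancy via subgroup
  have key' : ∀ s ∈ S, ∀ g : G, h (g * s) = h g := by
    intro s hs g
    have := key s⁻¹ (hS_symm s hs) g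
    rwa [inv_inv] at this
  let K : Subgroup G :=
    { carrier := {k : G | ∀ g : G, h (g * k) = h g}
      one_mem' := by intro g; simp
      mul_mem' := by
        intro a b ha hb g
        have : g * (a * b) = (g * a) * b := by group
        rw [this, hb (g * a), ha g]
      inv_mem' := by
        intro a ha g
        have := ha (g * a⁻¹)
        rw [show g * a⁻¹ * a = g by group] at this
        exact this.symm }
  have hSK : (S : Set G) ⊆ K := fun s hs => key' s hs
  have hKtop : K = ⊤ := by
    rw [eq_top_iff, ← hS_gen]
    exact (Subgroup.closure_le K).mpr hSK
  have hconst : ∀ g : G, h g = h 1 := by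
    intro g
    have hg : g ∈ K := by rw [hKtop]; trivial
    have := hg 1
    rwa [one_mul] at this
  refine ⟨fun g => (x : ∀ _ : G, ℝ) g, ?_, h 1, fun g => hconst g⟩
  have := (lp.memℓp x).summable hptq
  rw [hqt] at this
  exact this.congr fun g => by rw [Real.norm_eq_abs]
end

section
/- Let G be a finitely generated nonamenable group with finite symmetric generating set S, and let 1 < p ≤ p'. Assume: (i) every f ∈ D^p(G) \ L^p(G) decomposes as f = u + h with u ∈ L^p(G) and h a nonconstant p-harmonic function (valid when L^p(G) is closed in D^p(G)/ℝ and the decomposition theorem applies); (ii) every p-harmonic function in C₀(G) is zero. Then f ∉ L^{p'}(G). In other words, any function in D^p(G) representing a nonzero class in H¹(G, L^p(G)) also represents a nonzero class in H¹(G, L^{p'}(G)), giving an inclusion H¹(G, L^p(G)) ⊆ H¹(G, L^{p'}(G)). -/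
lemma finite_of_summable_rpow {G : Type*} (v : G → ℝ) (q : ℝ) (hq : 0 < q)
    (hv : Summable fun g => |v g| ^ q) (ε : ℝ) (hε : 0 < ε) :
    {g : G | ε < |v g|}.Finite := by
  have h0 := hv.tendsto_cofinite_zero
  have hfin : {g : G | ε ^ q ≤ |v g| ^ q}.Finite := by
    have := h0.eventually (eventually_lt_nhds (show (0:ℝ) < ε ^ q from Real.rpow_pos_of_pos hε q))
    have := Filter.eventually_cofinite.mp this
    exact this.subset (fun g hg => by simp only [Set.mem_setOf_eq] at hg ⊢; linarith [hg])
  refine hfin.subset (fun g hg => ?_)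
  simp only [Set.mem_setOf_eq] at hg ⊢
  exact (Real.rpow_lt_rpow hε.le hg hq).le

/-- Inclusion for nonamenable groups: if `f = u + h` with `u ∈ L^p(G)` and `h`
nonconstant `p`-harmonic, and if every `p`-harmonic function in `C₀(G)` vanishes,
then `f ∉ L^{p'}(G)` for every `p' ≥ p`; hence a nonzero class of
`H¹(G, L^p(G))` stays nonzero in `H¹(G, L^{p'}(G))`. -/
theorem nonzero_class_persists {G : Type*} [Group G] [Infinite G]
    (S : Finset G) (hS_symm : ∀ s ∈ S, s⁻¹ ∈ S)
    (hS_gen : Subgroup.closure (S : Set G) = ⊤)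
    (p p' : ℝ) (hp : 1 < p) (hpp' : p ≤ p')
    (f u h : G → ℝ)
    (hu : Summable fun g : G => |u g| ^ p)
    (hharm : ∀ g : G,
      ∑ s ∈ S, |h (g * s⁻¹) - h g| ^ (p - 2) * (h (g * s⁻¹) - h g) = 0)
    (hnonconst : ¬ ∃ c : ℝ, ∀ g : G, h g = c)
    (hdecomp : ∀ g : G, f g = u g + h g)
    (hmaxprin : ∀ h' : G → ℝ,
      (∀ g : G,
        ∑ s ∈ S, |h' (g * s⁻¹) - h' g| ^ (p - 2) * (h' (g * s⁻¹) - h' g) = 0) →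
      (∀ ε : ℝ, 0 < ε → {g : G | ε < |h' g|}.Finite) →
      ∀ g : G, h' g = 0) :
    ¬ Summable fun g : G => |f g| ^ p' := by
  intro hf
  have hp0 : 0 < p := by linarith
  have hp'0 : 0 < p' := by linarith
  have hC0 : ∀ ε : ℝ, 0 < ε → {g : G | ε < |h g|}.Finite := by
    intro ε hε
    have hfF := finite_of_summable_rpow f p' hp'0 hf (ε / 2) (by linarith)
    have huF := finite_of_summable_rpow u p hp0 hu (ε / 2) (by linarith)
    refine (hfF.union huF).subset (fun g hg => ?_)
    simp only [Set.mem_setOf_eq, Set.mem_union] at hg ⊢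
    by_contra hc
    push_neg at hc
    have := hdecomp g
    have := abs_sub_abs_le_abs_sub (h g) (-(u g))
    simp only [abs_neg, sub_neg_eq_add] at this
    have h1 : |h g| ≤ |u g + h g| + |u g| := by rw [add_comm (u g)]; linarith
    rw [← hdecomp g] at h1
    linarith [hc.1, hc.2]
  have hz := hmaxprin h hharm hC0
  exact hnonconst ⟨0, hz⟩
end
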